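/- Let T ≥ 0 and z ∈ ℂ with Re z > 0, and define g(t) = Σ_{n=0}^∞ ((−1)^n T^n t^n / (n!)²) for t > 0 (the series converges absolutely). Then t ↦ g(t) e^{−zt} is integrable on (0,∞) and ∫_0^∞ g(t) e^{−zt} dt = (1/z) e^{−T/z}. -/

import Mathlib

open MeasureTheory Set Filter Topology
open scoped Nat ENNReal

/-!
With `aₙ = (-T)ⁿ / (n!)²` we have `g(t) e^{-zt} = ∑ aₙ tⁿ e^{-zt}` on `t > 0`, and
integration by parts gives `∫₀^∞ tⁿ e^{-zt} dt = n! / z^{n+1}`. The integrals of the absolute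
values of the terms are `|T|ⁿ / (n! (Re z)^{n+1})`, a convergent series, so the series may be
integrated term by term: `∑ (-T/z)ⁿ / (n! z) = e^{-T/z} / z`.
-/

theorem integrable_tsum_of_summable_integral_norm {α E ι : Type*} [MeasurableSpace α]
    {μ : Measure α} [NormedAddCommGroup E] [CompleteSpace E] [Countable ι] {F : ι → α → E}
    (hF_int : ∀ i, Integrable (F i) μ) (hF_sum : Summable fun i ↦ ∫ a, ‖F i a‖ ∂μ) :
    Integrable (fun a ↦ ∑' i, F i a) μ := by
  let f : ι → α →₁[μ] E := fun i ↦ (hF_int i).toL1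
  have hf : ∑' i, ‖f i‖ₑ ≠ ∞ := by
    have h_enorm (i : ι) : ‖f i‖ₑ = ENNReal.ofReal (∫ a, ‖F i a‖ ∂μ) := by
      rw [ofReal_integral_norm_eq_lintegral_enorm (hF_int i), Lp.enorm_def,
        eLpNorm_one_eq_lintegral_enorm]
      exact lintegral_congr_ae ((hF_int i).coeFn_toL1.mono fun a ha ↦ congrArg _ ha)
    rw [tsum_congr h_enorm,
      ← ENNReal.ofReal_tsum_of_nonneg (fun i ↦ integral_nonneg fun a ↦ norm_nonneg _) hF_sum]
    exact ENNReal.ofReal_ne_top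
  refine (L1.integrable_coeFn (∑' i, f i)).congr ?_
  filter_upwards [Lp.coeFn_tsum hf, ae_all_iff.2 fun i ↦ (hF_int i).coeFn_toL1]
    with a h_tsum h_toL1
  rw [h_tsum]
  exact tsum_congr h_toL1

section LaplacePow

variable {z : ℂ}

lemma norm_pow_mul_cexp_neg_mul {t : ℝ} (ht : 0 ≤ t) (n : ℕ) :
    ‖(t : ℂ) ^ n * Complex.exp (-z * t)‖ = t ^ n * Real.exp (-z.re * t) := by
  simp [Complex.norm_exp, abs_of_nonneg ht]

lemma integrableOn_pow_mul_cexp_neg_mul_Ioi (n : ℕ) (hz : 0 < z.re) :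
    IntegrableOn (fun t : ℝ ↦ (t : ℂ) ^ n * Complex.exp (-z * t)) (Ioi 0) := by
  refine (integrableOn_rpow_mul_exp_neg_mul_rpow (s := n) (p := 1)
    (neg_one_lt_zero.trans_le n.cast_nonneg) one_pos hz).mono' (by fun_prop) ?_
  filter_upwards [ae_restrict_mem measurableSet_Ioi] with t ht
  rw [norm_pow_mul_cexp_neg_mul (le_of_lt ht), Real.rpow_natCast, Real.rpow_one]

lemma tendsto_pow_mul_cexp_neg_mul_atTop (n : ℕ) (hz : 0 < z.re) :
    Tendsto (fun t : ℝ ↦ (t : ℂ) ^ n * Complex.exp (-z * t)) atTop (𝓝 0) := by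
  rw [tendsto_zero_iff_norm_tendsto_zero]
  refine (tendsto_rpow_mul_exp_neg_mul_atTop_nhds_zero n z.re hz).congr' ?_
  filter_upwards [eventually_ge_atTop 0] with t ht
  rw [norm_pow_mul_cexp_neg_mul ht, Real.rpow_natCast]

lemma hasDerivAt_pow_succ_mul_cexp_neg_mul (n : ℕ) (t : ℝ) :
    HasDerivAt (fun s : ℝ ↦ (s : ℂ) ^ (n + 1) * Complex.exp (-z * s))
      ((n + 1) * ((t : ℂ) ^ n * Complex.exp (-z * t))
        - z * ((t : ℂ) ^ (n + 1) * Complex.exp (-z * t))) t := by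
  have h := ((hasDerivAt_pow (n + 1) (t : ℂ)).mul
    (((hasDerivAt_id (t : ℂ)).const_mul (-z)).cexp)).comp_ofReal
  exact h.congr_deriv (by push_cast [Nat.add_sub_cancel, id]; ring)

lemma integral_pow_succ_mul_cexp_neg_mul_Ioi (n : ℕ) (hz : 0 < z.re) :
    z * ∫ t in Ioi (0 : ℝ), (t : ℂ) ^ (n + 1) * Complex.exp (-z * t)
      = (n + 1) * ∫ t in Ioi (0 : ℝ), (t : ℂ) ^ n * Complex.exp (-z * t) := by
  have hn := integrableOn_pow_mul_cexp_neg_mul_Ioi n hz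
  have hn1 := integrableOn_pow_mul_cexp_neg_mul_Ioi (n + 1) hz
  have h := integral_Ioi_of_hasDerivAt_of_tendsto'
    (fun t _ ↦ hasDerivAt_pow_succ_mul_cexp_neg_mul n t)
    ((hn.const_mul _).sub (hn1.const_mul _)) (tendsto_pow_mul_cexp_neg_mul_atTop (n + 1) hz)
  rw [integral_sub (hn.const_mul _) (hn1.const_mul _), integral_const_mul,
    integral_const_mul] at h
  simp only [Complex.ofReal_zero, ne_eq, Nat.add_eq_zero_iff, one_ne_zero, and_false,
    not_false_eq_true, zero_pow, zero_mul, sub_zero] at h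
  linear_combination -h

theorem integral_pow_mul_cexp_neg_mul_Ioi (n : ℕ) (hz : 0 < z.re) :
    ∫ t in Ioi (0 : ℝ), (t : ℂ) ^ n * Complex.exp (-z * t) = n ! / z ^ (n + 1) := by
  have hz0 : z ≠ 0 := fun h ↦ by simp [h] at hz
  induction n with
  | zero =>
    have h := integral_exp_mul_complex_Ioi (a := -z) (by simpa using hz) 0
    simpa [div_neg, neg_div] using h
  | succ n ih =>
    apply mul_left_cancel₀ hz0
    rw [integral_pow_succ_mul_cexp_neg_mul_Ioi n hz, ih, Nat.factorial_succ]
    field_simp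
    push_cast
    ring

theorem integral_norm_pow_mul_cexp_neg_mul_Ioi (n : ℕ) (hz : 0 < z.re) :
    ∫ t in Ioi (0 : ℝ), ‖(t : ℂ) ^ n * Complex.exp (-z * t)‖ = n ! / z.re ^ (n + 1) := by
  apply Complex.ofReal_injective
  rw [← integral_complex_ofReal]
  push_cast
  rw [← integral_pow_mul_cexp_neg_mul_Ioi n (z := z.re) (by simpa using hz)]
  refine setIntegral_congr_fun measurableSet_Ioi fun t ht ↦ ?_
  rw [norm_pow_mul_cexp_neg_mul (le_of_lt ht)]
  push_cast
  rfl

variable {a : ℕ → ℂ}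

lemma summable_integral_norm_mul_pow_mul_cexp_neg_mul_Ioi (hz : 0 < z.re)
    (ha : Summable fun n ↦ ‖a n‖ * n ! / z.re ^ (n + 1)) :
    Summable fun n ↦ ∫ t in Ioi (0 : ℝ), ‖a n * ((t : ℂ) ^ n * Complex.exp (-z * t))‖ := by
  refine ha.congr fun n ↦ ?_
  simp_rw [norm_mul (a n), integral_const_mul, integral_norm_pow_mul_cexp_neg_mul_Ioi n hz,
    mul_div_assoc]

theorem integrableOn_tsum_mul_pow_mul_cexp_neg_mul_Ioi (hz : 0 < z.re)
    (ha : Summable fun n ↦ ‖a n‖ * n ! / z.re ^ (n + 1)) :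
    IntegrableOn (fun t : ℝ ↦ (∑' n, a n * (t : ℂ) ^ n) * Complex.exp (-z * t)) (Ioi 0) := by
  simp_rw [← tsum_mul_right, mul_assoc]
  exact integrable_tsum_of_summable_integral_norm
    (fun n ↦ (integrableOn_pow_mul_cexp_neg_mul_Ioi n hz).const_mul (a n))
    (summable_integral_norm_mul_pow_mul_cexp_neg_mul_Ioi hz ha)

theorem integral_tsum_mul_pow_mul_cexp_neg_mul_Ioi (hz : 0 < z.re)
    (ha : Summable fun n ↦ ‖a n‖ * n ! / z.re ^ (n + 1)) :
    ∫ t in Ioi (0 : ℝ), (∑' n, a n * (t : ℂ) ^ n) * Complex.exp (-z * t)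
      = ∑' n, a n * (n ! / z ^ (n + 1)) := by
  simp_rw [← tsum_mul_right, mul_assoc]
  rw [← integral_tsum_of_summable_integral_norm
    (fun n ↦ (integrableOn_pow_mul_cexp_neg_mul_Ioi n hz).const_mul (a n))
    (summable_integral_norm_mul_pow_mul_cexp_neg_mul_Ioi hz ha)]
  simp_rw [integral_const_mul, integral_pow_mul_cexp_neg_mul_Ioi _ hz]

end LaplacePow

theorem laplace_transform_bessel_J0_general (T : ℝ)
    (z : ℂ) (hz : 0 < z.re)
    (g : ℝ → ℝ)
    (hg : ∀ t ∈ Set.Ioi (0 : ℝ), g t = ∑' n : ℕ,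
      (-1 : ℝ) ^ n * T ^ n * t ^ n / ((Nat.factorial n : ℝ)) ^ 2) :
    IntegrableOn (fun t : ℝ => (g t : ℂ) * Complex.exp (-z * t)) (Set.Ioi 0) ∧
    ∫ t in Set.Ioi (0 : ℝ), (g t : ℂ) * Complex.exp (-z * t)
      = (1 / z) * Complex.exp (-(T : ℂ) / z) := by
  set a : ℕ → ℂ := fun n ↦ (-T : ℂ) ^ n / (n ! : ℂ) ^ 2
  have hg_series : ∀ t ∈ Ioi (0 : ℝ),
      (g t : ℂ) * Complex.exp (-z * t) = (∑' n, a n * (t : ℂ) ^ n) * Complex.exp (-z * t) := by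
    intro t ht
    rw [hg t ht, Complex.ofReal_tsum]
    congr 1
    refine tsum_congr fun n ↦ ?_
    push_cast
    ring
  have ha : Summable fun n ↦ ‖a n‖ * n ! / z.re ^ (n + 1) := by
    refine ((Real.summable_pow_div_factorial (|T| / z.re)).mul_right z.re⁻¹).congr fun n ↦ ?_
    simp only [a, norm_div, norm_pow, norm_neg, Complex.norm_real, Complex.norm_natCast,
      Real.norm_eq_abs, div_pow]
    field_simp
    ring
  have h_exp : ∑' n, a n * (n ! / z ^ (n + 1)) = 1 / z * Complex.exp (-T / z) := by
    rw [Complex.exp_eq_exp_ℂ, NormedSpace.exp_eq_tsum_div, ← tsum_mul_left]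
    refine tsum_congr fun n ↦ ?_
    simp only [a, div_pow, pow_succ]
    field_simp
  refine ⟨(integrableOn_tsum_mul_pow_mul_cexp_neg_mul_Ioi hz ha).congr_fun
    (fun t ht ↦ (hg_series t ht).symm) measurableSet_Ioi, ?_⟩
  rw [setIntegral_congr_fun measurableSet_Ioi hg_series,
    integral_tsum_mul_pow_mul_cexp_neg_mul_Ioi hz ha, h_exp]

/-- **Inverse Laplace transform of `(1/z) e^{−T/z}`** (equation (4.12) in Section 4.3.1 of
the paper). For `T ≥ 0`, `Re z > 0`, and `g(t) = Σ_{n≥0} (−1)^n T^n t^n / (n!)²`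
(the Bessel function `J₀(2√(Tt))`), the function `t ↦ g(t) e^{−zt}` is integrable on
`(0,∞)` and its integral equals `(1/z) e^{−T/z}`. -/
theorem laplace_transform_bessel_J0 (T : ℝ) (hT : 0 ≤ T)
    (z : ℂ) (hz : 0 < z.re)
    (g : ℝ → ℝ)
    (hg : ∀ t ∈ Set.Ioi (0 : ℝ), g t = ∑' n : ℕ,
      (-1 : ℝ) ^ n * T ^ n * t ^ n / ((Nat.factorial n : ℝ)) ^ 2) :
    IntegrableOn (fun t : ℝ => (g t : ℂ) * Complex.exp (-z * t)) (Set.Ioi 0) ∧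
    ∫ t in Set.Ioi (0 : ℝ), (g t : ℂ) * Complex.exp (-z * t)
      = (1 / z) * Complex.exp (-(T : ℂ) / z) :=
  laplace_transform_bessel_J0_general T z hz g hg
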